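/- In the pushout construction: with notation as above, let G̲ be the quotient of T * G by the left action of S given by s·(t, γ) = (t·φ(s⁻¹), sγ). Then G̲ is a groupoid with multiplication [t,γ][t',γ'] = [t·(π(γ)·t'), γγ'], the map π̲ : G̲ → H, [t,γ] ↦ π(γ) is a surjective groupoid homomorphism which is the identity on units, and its kernel is isomorphic to T via t ↦ [t, p_T(t)]. -/

import Mathlib

/-!
`T * G` is the semidirect product of the group bundle `T` by `G` acting through `π`, and the
`S`-action `s·(t, γ) = (t·φ(s⁻¹), sγ)` is left multiplication by `N = {(φ(s⁻¹), s) | s ∈ S}`.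
Since `φ` is multiplicative and equivariant, `N` is a normal subgroupoid of `T * G` inside its
isotropy, and left multiplication by such a subgroupoid is a congruence (`a n = (a n a⁻¹) a`),
so the orbit space `G̲` inherits the groupoid structure. The homomorphism `(t, γ) ↦ π γ` kills `N`
and descends to `π̲`. A class `[t, γ]` lies in its kernel iff `γ ∈ S`, and then
`[t, γ] = [t·φ(γ), 1]`; an element of `S` relating `[t, 1]` and `[t', 1]` must be a unit, so
`t = t'`.
-/

/-- An (algebraic) groupoid with unit space `X` and arrow space `A`.
The multiplication is total, but the axioms only constrain it on
composable pairs, i.e. pairs `(a, b)` with `src a = rng b`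
(so `mul a b` corresponds to the product `a b` in the paper,
with `s (a b) = s b` and `r (a b) = r a`). -/
structure Gpd (X : Type*) (A : Type*) where
  src : A → X
  rng : A → X
  mul : A → A → A
  inv : A → A
  unit : X → A
  src_unit : ∀ x, src (unit x) = x
  rng_unit : ∀ x, rng (unit x) = x
  src_mul : ∀ a b, src a = rng b → src (mul a b) = src b
  rng_mul : ∀ a b, src a = rng b → rng (mul a b) = rng a
  mul_assoc : ∀ a b c, src a = rng b → src b = rng c →
    mul (mul a b) c = mul a (mul b c)
  unit_mul : ∀ a, mul (unit (rng a)) a = a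
  mul_unit : ∀ a, mul a (unit (src a)) = a
  src_inv : ∀ a, src (inv a) = rng a
  rng_inv : ∀ a, rng (inv a) = src a
  mul_inv : ∀ a, mul a (inv a) = unit (rng a)
  inv_mul : ∀ a, mul (inv a) a = unit (src a)

/-- A bundle of abelian groups over `X`, with total space `T` and bundle map
`p`.  The (total) operations are only constrained fibrewise. -/
structure GrpBundle (X : Type*) (T : Type*) where
  p : T → X
  mul : T → T → T
  one : X → T
  inv : T → T
  p_one : ∀ x, p (one x) = x
  p_mul : ∀ s t, p s = p t → p (mul s t) = p s
  p_inv : ∀ t, p (inv t) = p t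
  mul_assoc : ∀ s t u, p s = p t → p t = p u →
    mul (mul s t) u = mul s (mul t u)
  mul_comm : ∀ s t, p s = p t → mul s t = mul t s
  one_mul : ∀ t, mul (one (p t)) t = t
  mul_inv : ∀ t, mul t (inv t) = one (p t)

/-- An action of the groupoid `H` on the group bundle `Tb` by group bundle
automorphisms covering the action of `H` on its units: an arrow `b` maps the
fibre over `src b` to the fibre over `rng b`. -/
structure GpdAction {X B T : Type*} (H : Gpd X B) (Tb : GrpBundle X T) where
  act : B → T → T
  p_act : ∀ b t, Tb.p t = H.src b → Tb.p (act b t) = H.rng b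
  act_unit : ∀ t, act (H.unit (Tb.p t)) t = t
  act_comp : ∀ b b' t, H.src b = H.rng b' → Tb.p t = H.src b' →
    act (H.mul b b') t = act b (act b' t)
  act_mul : ∀ b s t, Tb.p s = Tb.p t → Tb.p s = H.src b →
    act b (Tb.mul s t) = Tb.mul (act b s) (act b t)
  act_one : ∀ b, act b (Tb.one (H.src b)) = Tb.one (H.rng b)


namespace Gpd
variable {X A B : Type*} (Γ : Gpd X A)

theorem inv_mul_cancel_left {a b : A} (h : Γ.src a = Γ.rng b) :
    Γ.mul (Γ.inv a) (Γ.mul a b) = b := by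
  rw [← Γ.mul_assoc _ _ _ (Γ.src_inv a) h, Γ.inv_mul, h, Γ.unit_mul]

theorem mul_inv_cancel_right {a b : A} (h : Γ.src a = Γ.rng b) :
    Γ.mul (Γ.mul a b) (Γ.inv b) = a := by
  rw [Γ.mul_assoc _ _ _ h (Γ.rng_inv b).symm, Γ.mul_inv, ← h, Γ.mul_unit]

theorem eq_inv_of_mul_eq_unit {a b : A} (h : Γ.src a = Γ.rng b)
    (hab : Γ.mul a b = Γ.unit (Γ.rng a)) : b = Γ.inv a := by
  rw [← Γ.inv_mul_cancel_left h, hab, ← Γ.src_inv, Γ.mul_unit]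

theorem inv_inv (a : A) : Γ.inv (Γ.inv a) = a :=
  (Γ.eq_inv_of_mul_eq_unit (Γ.src_inv a) (by rw [Γ.inv_mul, Γ.rng_inv])).symm

theorem mul_inv_cancel_left {a b : A} (h : Γ.rng a = Γ.rng b) :
    Γ.mul a (Γ.mul (Γ.inv a) b) = b := by
  simpa only [Γ.inv_inv] using Γ.inv_mul_cancel_left (a := Γ.inv a) (by rw [Γ.src_inv, h])

theorem inv_mul_cancel_right {a b : A} (h : Γ.src a = Γ.src b) :
    Γ.mul (Γ.mul a (Γ.inv b)) b = a := by
  simpa only [Γ.inv_inv] using Γ.mul_inv_cancel_right (b := Γ.inv b) (by rw [h, Γ.rng_inv])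

theorem unit_mul_unit (x : X) : Γ.mul (Γ.unit x) (Γ.unit x) = Γ.unit x := by
  simpa only [Γ.src_unit] using Γ.mul_unit (Γ.unit x)

theorem inv_unit (x : X) : Γ.inv (Γ.unit x) = Γ.unit x :=
  (Γ.eq_inv_of_mul_eq_unit (by rw [Γ.src_unit, Γ.rng_unit])
    (by rw [Γ.unit_mul_unit, Γ.rng_unit])).symm

theorem mul_inv_rev {a b : A} (h : Γ.src a = Γ.rng b) :
    Γ.inv (Γ.mul a b) = Γ.mul (Γ.inv b) (Γ.inv a) := by
  have hba : Γ.src (Γ.inv b) = Γ.rng (Γ.inv a) := by rw [Γ.src_inv, Γ.rng_inv, h]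
  refine (Γ.eq_inv_of_mul_eq_unit ?_ ?_).symm
  · rw [Γ.src_mul a b h, Γ.rng_mul _ _ hba, Γ.rng_inv]
  · rw [Γ.mul_assoc _ _ _ h (by rw [Γ.rng_mul _ _ hba, Γ.rng_inv]),
      Γ.mul_inv_cancel_left (by rw [Γ.rng_inv, h]), Γ.mul_inv, Γ.rng_mul a b h]

theorem inv_conj {a s : A} (h : Γ.src a = Γ.rng s) (hs : Γ.src s = Γ.rng s) :
    Γ.inv (Γ.mul (Γ.mul a s) (Γ.inv a)) = Γ.mul (Γ.mul a (Γ.inv s)) (Γ.inv a) := by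
  have has : Γ.src (Γ.mul a s) = Γ.rng (Γ.inv a) := by rw [Γ.src_mul a s h, Γ.rng_inv, h, hs]
  rw [Γ.mul_inv_rev has, Γ.inv_inv, Γ.mul_inv_rev h,
    Γ.mul_assoc a _ _ (by rw [Γ.rng_inv, h, hs]) (by rw [Γ.src_inv, Γ.rng_inv, h])]

structure IsHom (Δ : Gpd X B) (f : A → B) : Prop where
  src_apply : ∀ a, Δ.src (f a) = Γ.src a
  rng_apply : ∀ a, Δ.rng (f a) = Γ.rng a
  map_mul : ∀ a b, Γ.src a = Γ.rng b → f (Γ.mul a b) = Δ.mul (f a) (f b)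
  map_unit : ∀ x, f (Γ.unit x) = Δ.unit x

def ker (Δ : Gpd X B) (f : A → B) : Set A := {a | f a = Δ.unit (Γ.src a)}

theorem mem_ker {Δ : Gpd X B} {f : A → B} {a : A} :
    a ∈ Γ.ker Δ f ↔ f a = Δ.unit (Γ.src a) :=
  Iff.rfl

structure IsNormal (N : Set A) : Prop where
  src_eq_rng : ∀ n ∈ N, Γ.src n = Γ.rng n
  unit_mem : ∀ x, Γ.unit x ∈ N
  mul_mem : ∀ {m n}, m ∈ N → n ∈ N → Γ.src m = Γ.rng n → Γ.mul m n ∈ N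
  inv_mem : ∀ {n}, n ∈ N → Γ.inv n ∈ N
  conj_mem : ∀ {a n}, n ∈ N → Γ.src a = Γ.rng n → Γ.mul (Γ.mul a n) (Γ.inv a) ∈ N

namespace IsHom
variable {Γ} {C : Type*} {Δ : Gpd X B} {f : A → B}

theorem map_inv (hf : Γ.IsHom Δ f) (a : A) : f (Γ.inv a) = Δ.inv (f a) :=
  Δ.eq_inv_of_mul_eq_unit (by rw [hf.src_apply, hf.rng_apply, Γ.rng_inv])
    (by rw [← hf.map_mul _ _ (Γ.rng_inv a).symm, Γ.mul_inv, hf.map_unit, hf.rng_apply])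

theorem comp (hf : Γ.IsHom Δ f) {K : Gpd X C} {g : B → C} (hg : Δ.IsHom K g) :
    Γ.IsHom K (g ∘ f) where
  src_apply a := by simp only [Function.comp, hg.src_apply, hf.src_apply]
  rng_apply a := by simp only [Function.comp, hg.rng_apply, hf.rng_apply]
  map_mul a b h := by
    simp only [Function.comp, hf.map_mul a b h,
      hg.map_mul _ _ (by rw [hf.src_apply, hf.rng_apply, h])]
  map_unit x := by simp only [Function.comp, hf.map_unit, hg.map_unit]

theorem src_eq_rng_of_mem_ker (hf : Γ.IsHom Δ f) {a : A} (ha : a ∈ Γ.ker Δ f) :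
    Γ.src a = Γ.rng a := by
  rw [← hf.rng_apply, ha, Δ.rng_unit]

theorem isNormal_ker (hf : Γ.IsHom Δ f) : Γ.IsNormal (Γ.ker Δ f) where
  src_eq_rng _ := hf.src_eq_rng_of_mem_ker
  unit_mem x := by rw [Γ.mem_ker, hf.map_unit, Γ.src_unit]
  mul_mem {m n} hm hn h := by
    rw [Γ.mem_ker, hf.map_mul m n h, hm, hn, Γ.src_mul m n h, h,
      ← hf.src_eq_rng_of_mem_ker hn, Δ.unit_mul_unit]
  inv_mem {n} hn := by
    rw [Γ.mem_ker, hf.map_inv, hn, Δ.inv_unit, Γ.src_inv, hf.src_eq_rng_of_mem_ker hn]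
  conj_mem {a n} hn h := by
    have h' : Γ.src (Γ.mul a n) = Γ.rng (Γ.inv a) := by
      rw [Γ.src_mul a n h, Γ.rng_inv, h, hf.src_eq_rng_of_mem_ker hn]
    rw [Γ.mem_ker, hf.map_mul _ _ h', hf.map_mul a n h, hn, hf.src_eq_rng_of_mem_ker hn, ← h,
      ← hf.src_apply a, Δ.mul_unit, hf.map_inv, Δ.mul_inv, Γ.src_mul _ _ h', Γ.src_inv,
      hf.rng_apply]

end IsHom

def orbitRel (N : Set A) (a b : A) : Prop :=
  ∃ n ∈ N, Γ.src n = Γ.rng a ∧ b = Γ.mul n a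

open Classical in
/-- A total extension of `Γ.mul`: the quotient multiplication must be defined on all pairs of
classes, and `Γ.mul` is unconstrained off composable pairs. -/
noncomputable def mulOrFst (a b : A) : A := if Γ.src a = Γ.rng b then Γ.mul a b else a

theorem mulOrFst_of_src_eq_rng {a b : A} (h : Γ.src a = Γ.rng b) :
    Γ.mulOrFst a b = Γ.mul a b :=
  if_pos h

variable {Γ} {N : Set A}

theorem src_eq_of_orbitRel {a b : A} (h : Γ.orbitRel N a b) : Γ.src a = Γ.src b := by
  obtain ⟨n, -, hn, rfl⟩ := h
  rw [Γ.src_mul n a hn]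

theorem orbitRel_mul_left {a a' b : A} (h : Γ.orbitRel N a a') (hab : Γ.src a = Γ.rng b) :
    Γ.orbitRel N (Γ.mul a b) (Γ.mul a' b) := by
  obtain ⟨n, hnN, hn, rfl⟩ := h
  exact ⟨n, hnN, by rw [Γ.rng_mul a b hab, hn], Γ.mul_assoc n a b hn hab⟩

namespace IsNormal

theorem rng_eq_of_orbitRel (hN : Γ.IsNormal N) {a b : A} (h : Γ.orbitRel N a b) :
    Γ.rng a = Γ.rng b := by
  obtain ⟨n, hnN, hn, rfl⟩ := h
  rw [Γ.rng_mul n a hn, ← hN.src_eq_rng n hnN, hn]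

theorem orbitRel_equivalence (hN : Γ.IsNormal N) : Equivalence (Γ.orbitRel N) where
  refl a := ⟨Γ.unit (Γ.rng a), hN.unit_mem _, Γ.src_unit _, (Γ.unit_mul a).symm⟩
  symm := by
    rintro a _ ⟨n, hnN, hn, rfl⟩
    refine ⟨Γ.inv n, hN.inv_mem hnN, ?_, (Γ.inv_mul_cancel_left hn).symm⟩
    rw [Γ.src_inv, Γ.rng_mul n a hn]
  trans := by
    rintro a _ _ ⟨n, hnN, hn, rfl⟩ ⟨m, hmN, hm, rfl⟩
    have hmn : Γ.src m = Γ.rng n := by rw [hm, Γ.rng_mul n a hn]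
    refine ⟨Γ.mul m n, hN.mul_mem hmN hnN hmn, ?_, (Γ.mul_assoc m n a hmn hn).symm⟩
    rw [Γ.src_mul m n hmn, hn]

theorem mk_eq_mk_iff (hN : Γ.IsNormal N) {a b : A} :
    Quot.mk (Γ.orbitRel N) a = Quot.mk _ b ↔ Γ.orbitRel N a b :=
  Quot.eq.trans hN.orbitRel_equivalence.eqvGen_iff

/-- Normality enters here: `a n = (a n a⁻¹) a`. -/
theorem orbitRel_mul (hN : Γ.IsNormal N) {a n : A} (hnN : n ∈ N) (h : Γ.src a = Γ.rng n) :
    Γ.orbitRel N a (Γ.mul a n) := by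
  have h' : Γ.src (Γ.mul a n) = Γ.src a := by rw [Γ.src_mul a n h, h, hN.src_eq_rng n hnN]
  refine ⟨_, hN.conj_mem hnN h, ?_, (Γ.inv_mul_cancel_right h').symm⟩
  rw [Γ.src_mul _ _ (by rw [h', Γ.rng_inv]), Γ.src_inv]

theorem orbitRel_mul_right (hN : Γ.IsNormal N) {a b b' : A} (h : Γ.orbitRel N b b')
    (hab : Γ.src a = Γ.rng b) : Γ.orbitRel N (Γ.mul a b) (Γ.mul a b') := by
  obtain ⟨n, hnN, hn, rfl⟩ := h
  have han : Γ.src a = Γ.rng n := by rw [hab, ← hn, hN.src_eq_rng n hnN]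
  rw [← Γ.mul_assoc a n b han hn]
  exact Γ.orbitRel_mul_left (hN.orbitRel_mul hnN han) hab

theorem orbitRel_inv (hN : Γ.IsNormal N) {a b : A} (h : Γ.orbitRel N a b) :
    Γ.orbitRel N (Γ.inv a) (Γ.inv b) := by
  obtain ⟨n, hnN, hn, rfl⟩ := h
  rw [Γ.mul_inv_rev hn]
  exact hN.orbitRel_mul (hN.inv_mem hnN) (by rw [Γ.src_inv, Γ.rng_inv, hn])

theorem orbitRel_mulOrFst (hN : Γ.IsNormal N) {a a' b b' : A} (ha : Γ.orbitRel N a a')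
    (hb : Γ.orbitRel N b b') : Γ.orbitRel N (Γ.mulOrFst a b) (Γ.mulOrFst a' b') := by
  by_cases hab : Γ.src a = Γ.rng b
  · have ha'b : Γ.src a' = Γ.rng b := (Γ.src_eq_of_orbitRel ha).symm.trans hab
    rw [Γ.mulOrFst_of_src_eq_rng hab,
      Γ.mulOrFst_of_src_eq_rng (ha'b.trans (hN.rng_eq_of_orbitRel hb))]
    exact hN.orbitRel_equivalence.trans (Γ.orbitRel_mul_left ha hab)
      (hN.orbitRel_mul_right hb ha'b)
  · have ha'b' : ¬Γ.src a' = Γ.rng b' := by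
      rwa [← Γ.src_eq_of_orbitRel ha, ← hN.rng_eq_of_orbitRel hb]
    rwa [mulOrFst, mulOrFst, if_neg hab, if_neg ha'b']

noncomputable def quotient (hN : Γ.IsNormal N) : Gpd X (Quot (Γ.orbitRel N)) where
  src := Quot.lift Γ.src fun _ _ => Γ.src_eq_of_orbitRel
  rng := Quot.lift Γ.rng fun _ _ => hN.rng_eq_of_orbitRel
  mul := Quot.map₂ Γ.mulOrFst
    (fun _ _ _ => hN.orbitRel_mulOrFst (hN.orbitRel_equivalence.refl _))
    (fun _ _ _ h => hN.orbitRel_mulOrFst h (hN.orbitRel_equivalence.refl _))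
  inv := Quot.map Γ.inv fun _ _ => hN.orbitRel_inv
  unit x := Quot.mk _ (Γ.unit x)
  src_unit := Γ.src_unit
  rng_unit := Γ.rng_unit
  src_mul := by
    rintro ⟨a⟩ ⟨b⟩ (h : Γ.src a = Γ.rng b)
    exact (congrArg Γ.src (Γ.mulOrFst_of_src_eq_rng h)).trans (Γ.src_mul a b h)
  rng_mul := by
    rintro ⟨a⟩ ⟨b⟩ (h : Γ.src a = Γ.rng b)
    exact (congrArg Γ.rng (Γ.mulOrFst_of_src_eq_rng h)).trans (Γ.rng_mul a b h)
  mul_assoc := by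
    rintro ⟨a⟩ ⟨b⟩ ⟨c⟩ (hab : Γ.src a = Γ.rng b) (hbc : Γ.src b = Γ.rng c)
    show Quot.mk _ (Γ.mulOrFst (Γ.mulOrFst a b) c) = Quot.mk _ (Γ.mulOrFst a (Γ.mulOrFst b c))
    rw [Γ.mulOrFst_of_src_eq_rng hab, Γ.mulOrFst_of_src_eq_rng hbc,
      Γ.mulOrFst_of_src_eq_rng (by rwa [Γ.src_mul a b hab]),
      Γ.mulOrFst_of_src_eq_rng (by rwa [Γ.rng_mul b c hbc]), Γ.mul_assoc a b c hab hbc]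
  unit_mul := by
    rintro ⟨a⟩
    exact congrArg (Quot.mk _) ((Γ.mulOrFst_of_src_eq_rng (Γ.src_unit _)).trans (Γ.unit_mul a))
  mul_unit := by
    rintro ⟨a⟩
    exact congrArg (Quot.mk _)
      ((Γ.mulOrFst_of_src_eq_rng (Γ.rng_unit _).symm).trans (Γ.mul_unit a))
  src_inv := by rintro ⟨a⟩; exact Γ.src_inv a
  rng_inv := by rintro ⟨a⟩; exact Γ.rng_inv a
  mul_inv := by
    rintro ⟨a⟩
    exact congrArg (Quot.mk _)
      ((Γ.mulOrFst_of_src_eq_rng (Γ.rng_inv a).symm).trans (Γ.mul_inv a))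
  inv_mul := by
    rintro ⟨a⟩
    exact congrArg (Quot.mk _) ((Γ.mulOrFst_of_src_eq_rng (Γ.src_inv a)).trans (Γ.inv_mul a))

theorem quotient_mul_mk (hN : Γ.IsNormal N) {a b : A} (h : Γ.src a = Γ.rng b) :
    hN.quotient.mul (Quot.mk _ a) (Quot.mk _ b) = Quot.mk _ (Γ.mul a b) :=
  congrArg (Quot.mk _) (Γ.mulOrFst_of_src_eq_rng h)

end IsNormal

namespace IsHom
variable {Δ : Gpd X B} {f : A → B}

def quotientLift (hf : Γ.IsHom Δ f) (hNf : N ⊆ Γ.ker Δ f) : Quot (Γ.orbitRel N) → B :=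
  Quot.lift f fun a _ ⟨n, hnN, hn, hb⟩ => by
    rw [hb, hf.map_mul n a hn, hNf hnN, hn, ← hf.rng_apply, Δ.unit_mul]

theorem isHom_quotientLift (hf : Γ.IsHom Δ f) (hNf : N ⊆ Γ.ker Δ f) (hN : Γ.IsNormal N) :
    hN.quotient.IsHom Δ (hf.quotientLift hNf) where
  src_apply := by rintro ⟨a⟩; exact hf.src_apply a
  rng_apply := by rintro ⟨a⟩; exact hf.rng_apply a
  map_mul := by
    rintro ⟨a⟩ ⟨b⟩ (h : Γ.src a = Γ.rng b)
    rw [hN.quotient_mul_mk h]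
    exact hf.map_mul a b h
  map_unit := hf.map_unit

end IsHom

end Gpd

namespace GrpBundle
variable {X T : Type*} (Tb : GrpBundle X T)

theorem mul_one (t : T) : Tb.mul t (Tb.one (Tb.p t)) = t := by
  rw [Tb.mul_comm _ _ (Tb.p_one _).symm, Tb.one_mul]

theorem inv_mul (t : T) : Tb.mul (Tb.inv t) t = Tb.one (Tb.p t) := by
  rw [Tb.mul_comm _ _ (Tb.p_inv t), Tb.mul_inv]

theorem eq_inv_of_mul_eq_one {s t : T} (h : Tb.p s = Tb.p t)
    (hst : Tb.mul s t = Tb.one (Tb.p s)) : t = Tb.inv s :=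
  calc t = Tb.mul (Tb.mul (Tb.inv s) s) t := by rw [Tb.inv_mul, h, Tb.one_mul]
    _ = Tb.mul (Tb.inv s) (Tb.mul s t) := Tb.mul_assoc _ _ _ (Tb.p_inv s) h
    _ = Tb.inv s := by rw [hst, ← Tb.p_inv s, Tb.mul_one]

theorem inv_inv (t : T) : Tb.inv (Tb.inv t) = t :=
  (Tb.eq_inv_of_mul_eq_one (Tb.p_inv t) (by rw [Tb.inv_mul, Tb.p_inv])).symm

theorem mul_mul_inv_cancel {s t : T} (h : Tb.p s = Tb.p t) :
    Tb.mul (Tb.mul s t) (Tb.inv s) = t := by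
  rw [Tb.mul_comm s t h, Tb.mul_assoc _ _ _ h.symm (Tb.p_inv s).symm, Tb.mul_inv, h, Tb.mul_one]

-- The carrier of the groupoid `T * G`.
abbrev FibProd {A : Type*} (G : Gpd X A) := {q : T × A // Tb.p q.1 = G.rng q.2}

def toFibProd {A : Type*} (G : Gpd X A) (t : T) : Tb.FibProd G :=
  ⟨(t, G.unit (Tb.p t)), (G.rng_unit _).symm⟩

theorem FibProd.snd_surjective {A : Type*} (G : Gpd X A) :
    Function.Surjective fun q : Tb.FibProd G => q.1.2 :=
  fun γ => ⟨⟨(Tb.one (G.rng γ), γ), Tb.p_one _⟩, rfl⟩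

end GrpBundle

namespace GpdAction
variable {X A B T : Type*} {G : Gpd X A} {Tb : GrpBundle X T} (ac : GpdAction G Tb)

theorem act_act_inv {a : A} {t : T} (h : Tb.p t = G.rng a) :
    ac.act a (ac.act (G.inv a) t) = t := by
  rw [← ac.act_comp _ _ _ (G.rng_inv a).symm (by rw [G.src_inv, h]), G.mul_inv, ← h,
    ac.act_unit]

def comap {H : Gpd X B} (ac : GpdAction H Tb) {π : A → B} (hπ : G.IsHom H π) :
    GpdAction G Tb where
  act a := ac.act (π a)
  p_act a t h := by rw [ac.p_act _ _ (by rw [hπ.src_apply, h]), hπ.rng_apply]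
  act_unit t := by rw [hπ.map_unit, ac.act_unit]
  act_comp a b t h ht := by
    rw [hπ.map_mul a b h, ac.act_comp _ _ _ (by rw [hπ.src_apply, hπ.rng_apply, h])
      (by rw [hπ.src_apply, ht])]
  act_mul a s t h hs := ac.act_mul _ s t h (by rw [hπ.src_apply, hs])
  act_one a := by rw [← hπ.src_apply, ac.act_one, hπ.rng_apply]

@[simp]
theorem comap_act {H : Gpd X B} (ac : GpdAction H Tb) {π : A → B} (hπ : G.IsHom H π)
    (a : A) (t : T) : (ac.comap hπ).act a t = ac.act (π a) t :=
  rfl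

theorem act_of_mem_ker {H : Gpd X B} (ac : GpdAction H Tb) {π : A → B} {s : A}
    (hs : s ∈ G.ker H π) {t : T} (ht : Tb.p t = G.src s) : ac.act (π s) t = t := by
  rw [hs, ← ht, ac.act_unit]

open Classical in
noncomputable def semidirect : Gpd X (Tb.FibProd G) where
  src q := G.src q.1.2
  rng q := G.rng q.1.2
  mul q q' := if h : G.src q.1.2 = G.rng q'.1.2 then
      ⟨(Tb.mul q.1.1 (ac.act q.1.2 q'.1.1), G.mul q.1.2 q'.1.2), by
        rw [Tb.p_mul _ _ (by rw [ac.p_act _ _ (q'.2.trans h.symm), q.2]), q.2,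
          G.rng_mul _ _ h]⟩
    else q
  inv q := ⟨(ac.act (G.inv q.1.2) (Tb.inv q.1.1), G.inv q.1.2), by
    rw [ac.p_act _ _ (by rw [Tb.p_inv, q.2, G.src_inv]), G.rng_inv]⟩
  unit x := ⟨(Tb.one x, G.unit x), by rw [Tb.p_one, G.rng_unit]⟩
  src_unit := G.src_unit
  rng_unit := G.rng_unit
  src_mul q q' h := by simp only [dif_pos h, G.src_mul _ _ h]
  rng_mul q q' h := by simp only [dif_pos h, G.rng_mul _ _ h]
  mul_assoc q₁ q₂ q₃ h₁₂ h₂₃ := by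
    have h₁₂₃ : G.src (G.mul q₁.1.2 q₂.1.2) = G.rng q₃.1.2 := by rw [G.src_mul _ _ h₁₂, h₂₃]
    have h₁₂₃' : G.src q₁.1.2 = G.rng (G.mul q₂.1.2 q₃.1.2) := by rw [G.rng_mul _ _ h₂₃, h₁₂]
    simp only [dif_pos h₁₂, dif_pos h₂₃, dif_pos h₁₂₃, dif_pos h₁₂₃']
    refine Subtype.ext (Prod.ext ?_ (G.mul_assoc _ _ _ h₁₂ h₂₃))
    have hp₂₃ : Tb.p (ac.act q₂.1.2 q₃.1.1) = G.rng q₂.1.2 := ac.p_act _ _ (q₃.2.trans h₂₃.symm)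
    have hp₁₂ : Tb.p (ac.act q₁.1.2 q₂.1.1) = G.rng q₁.1.2 := ac.p_act _ _ (q₂.2.trans h₁₂.symm)
    have hp₁₂₃ : Tb.p (ac.act q₁.1.2 (ac.act q₂.1.2 q₃.1.1)) = G.rng q₁.1.2 :=
      ac.p_act _ _ (hp₂₃.trans h₁₂.symm)
    dsimp only
    rw [ac.act_comp _ _ _ h₁₂ (q₃.2.trans h₂₃.symm),
      ac.act_mul _ _ _ (q₂.2.trans hp₂₃.symm) (q₂.2.trans h₁₂.symm),
      Tb.mul_assoc _ _ _ (q₁.2.trans hp₁₂.symm) (hp₁₂.trans hp₁₂₃.symm)]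
  unit_mul q := by
    simp only [dif_pos (G.src_unit (G.rng q.1.2))]
    refine Subtype.ext (Prod.ext ?_ (G.unit_mul _))
    dsimp only
    rw [← q.2, ac.act_unit, Tb.one_mul]
  mul_unit q := by
    simp only [dif_pos (G.rng_unit (G.src q.1.2)).symm]
    refine Subtype.ext (Prod.ext ?_ (G.mul_unit _))
    dsimp only
    rw [ac.act_one, ← q.2, Tb.mul_one]
  src_inv q := G.src_inv q.1.2
  rng_inv q := G.rng_inv q.1.2
  mul_inv q := by
    simp only [dif_pos (G.rng_inv q.1.2).symm]
    refine Subtype.ext (Prod.ext ?_ (G.mul_inv _))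
    dsimp only
    rw [ac.act_act_inv (by rw [Tb.p_inv, q.2]), Tb.mul_inv, q.2]
  inv_mul q := by
    simp only [dif_pos (G.src_inv q.1.2)]
    refine Subtype.ext (Prod.ext ?_ (G.inv_mul _))
    dsimp only
    rw [← ac.act_mul _ _ _ (Tb.p_inv _) (by rw [Tb.p_inv, q.2, G.src_inv]), Tb.inv_mul, q.2,
      ← G.src_inv, ac.act_one, G.rng_inv]

theorem semidirect_mul_val {q q' : Tb.FibProd G} (h : G.src q.1.2 = G.rng q'.1.2) :
    (ac.semidirect.mul q q').1 = (Tb.mul q.1.1 (ac.act q.1.2 q'.1.1), G.mul q.1.2 q'.1.2) := by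
  simp only [semidirect, dif_pos h]

theorem semidirect_inv_val (q : Tb.FibProd G) :
    (ac.semidirect.inv q).1 = (ac.act (G.inv q.1.2) (Tb.inv q.1.1), G.inv q.1.2) :=
  rfl

theorem isHom_semidirect_snd : ac.semidirect.IsHom G fun q => q.1.2 where
  src_apply _ := rfl
  rng_apply _ := rfl
  map_mul _ _ h := congrArg Prod.snd (ac.semidirect_mul_val h)
  map_unit _ := rfl

theorem semidirect_mul_toFibProd {t t' : T} (h : Tb.p t = Tb.p t') :
    ac.semidirect.mul (Tb.toFibProd G t) (Tb.toFibProd G t') = Tb.toFibProd G (Tb.mul t t') := by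
  have hc : G.src (G.unit (Tb.p t)) = G.rng (G.unit (Tb.p t')) := by
    rw [G.src_unit, G.rng_unit, h]
  refine Subtype.ext ((ac.semidirect_mul_val hc).trans ?_)
  simp only [GrpBundle.toFibProd]
  rw [Tb.p_mul _ _ h, h, ac.act_unit, G.unit_mul_unit]

end GpdAction

section Pushout
variable {X A B T : Type*} {G : Gpd X A} {H : Gpd X B} {Tb : GrpBundle X T}

/-- The paper's `φ : S → T` with `S = ker π`, extended arbitrarily to all of `A`. -/
structure IsEquivariantOnKer (G : Gpd X A) (ac : GpdAction H Tb) (π : A → B) (φ : A → T) :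
    Prop where
  p_apply : ∀ a ∈ G.ker H π, Tb.p (φ a) = G.src a
  map_mul : ∀ a b, a ∈ G.ker H π → b ∈ G.ker H π → G.src a = G.src b →
    φ (G.mul a b) = Tb.mul (φ a) (φ b)
  map_unit : ∀ x, φ (G.unit x) = Tb.one x
  map_conj : ∀ γ s, s ∈ G.ker H π → G.rng s = G.src γ →
    φ (G.mul (G.mul γ s) (G.inv γ)) = ac.act (π γ) (φ s)

/-- `{(φ(s⁻¹), s) | s ∈ S}`: left multiplication by it in `T * G` is the action
`s·(t, γ) = (t·φ(s⁻¹), sγ)`. -/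
def invGraph (Tb : GrpBundle X T) (G : Gpd X A) (S : Set A) (φ : A → T) : Set (Tb.FibProd G) :=
  {n | n.1.2 ∈ S ∧ n.1.1 = φ (G.inv n.1.2)}

namespace IsEquivariantOnKer
variable {ac : GpdAction H Tb} {π : A → B} {φ : A → T}

theorem map_inv (hφ : IsEquivariantOnKer G ac π φ) (hπ : G.IsHom H π) {s : A}
    (hs : s ∈ G.ker H π) : φ (G.inv s) = Tb.inv (φ s) := by
  have hiso := hπ.src_eq_rng_of_mem_ker hs
  have hsinv := hπ.isNormal_ker.inv_mem hs
  refine Tb.eq_inv_of_mul_eq_one ?_ ?_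
  · rw [hφ.p_apply s hs, hφ.p_apply _ hsinv, G.src_inv, hiso]
  · rw [← hφ.map_mul s _ hs hsinv (by rw [G.src_inv, hiso]), G.mul_inv, hφ.map_unit,
      hφ.p_apply s hs, hiso]

theorem mul_mem_invGraph (hφ : IsEquivariantOnKer G ac π φ) (hπ : G.IsHom H π)
    {m n : Tb.FibProd G} (hm : m ∈ invGraph Tb G (G.ker H π) φ)
    (hn : n ∈ invGraph Tb G (G.ker H π) φ) (h : G.src m.1.2 = G.rng n.1.2) :
    (ac.comap hπ).semidirect.mul m n ∈ invGraph Tb G (G.ker H π) φ := by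
  obtain ⟨hmS, hm1⟩ := hm
  obtain ⟨hnS, hn1⟩ := hn
  have hS := hπ.isNormal_ker
  have hpm : Tb.p (φ (G.inv m.1.2)) = G.src m.1.2 := by
    rw [hφ.p_apply _ (hS.inv_mem hmS), G.src_inv, hS.src_eq_rng _ hmS]
  have hpn : Tb.p (φ (G.inv n.1.2)) = G.src m.1.2 := by
    rw [hφ.p_apply _ (hS.inv_mem hnS), G.src_inv, ← h]
  rw [invGraph, Set.mem_ofPred_eq, (ac.comap hπ).semidirect_mul_val h]
  refine ⟨hS.mul_mem hmS hnS h, ?_⟩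
  dsimp only
  rw [GpdAction.comap_act, hm1, hn1, ac.act_of_mem_ker hmS hpn, G.mul_inv_rev h,
    hφ.map_mul _ _ (hS.inv_mem hnS) (hS.inv_mem hmS)
      (by rw [G.src_inv, G.src_inv, ← h, hS.src_eq_rng _ hmS]),
    Tb.mul_comm _ _ (hpm.trans hpn.symm)]

theorem inv_mem_invGraph (hφ : IsEquivariantOnKer G ac π φ) (hπ : G.IsHom H π)
    {n : Tb.FibProd G} (hn : n ∈ invGraph Tb G (G.ker H π) φ) :
    (ac.comap hπ).semidirect.inv n ∈ invGraph Tb G (G.ker H π) φ := by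
  obtain ⟨hnS, hn1⟩ := hn
  have hinvS := hπ.isNormal_ker.inv_mem hnS
  rw [invGraph, Set.mem_ofPred_eq, GpdAction.semidirect_inv_val]
  refine ⟨hinvS, ?_⟩
  rw [GpdAction.comap_act, ac.act_of_mem_ker hinvS (by rw [Tb.p_inv, n.2, G.src_inv]),
    G.inv_inv, hn1, hφ.map_inv hπ hnS, Tb.inv_inv]

theorem conj_mem_invGraph (hφ : IsEquivariantOnKer G ac π φ) (hπ : G.IsHom H π)
    {a n : Tb.FibProd G} (hn : n ∈ invGraph Tb G (G.ker H π) φ) (h : G.src a.1.2 = G.rng n.1.2) :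
    (ac.comap hπ).semidirect.mul ((ac.comap hπ).semidirect.mul a n)
      ((ac.comap hπ).semidirect.inv a) ∈ invGraph Tb G (G.ker H π) φ := by
  obtain ⟨hnS, hn1⟩ := hn
  have hS := hπ.isNormal_ker
  have hiso := hS.src_eq_rng _ hnS
  have hval := (ac.comap hπ).semidirect_mul_val h
  have han : G.src (G.mul a.1.2 n.1.2) = G.rng (G.inv a.1.2) := by
    rw [G.src_mul _ _ h, G.rng_inv, h, hiso]
  rw [invGraph, Set.mem_ofPred_eq, (ac.comap hπ).semidirect_mul_val (by rw [hval]; exact han),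
    hval, GpdAction.semidirect_inv_val]
  refine ⟨hS.conj_mem hnS h, ?_⟩
  dsimp only
  rw [← (ac.comap hπ).act_comp _ _ _ han (by rw [Tb.p_inv, a.2, G.src_inv])]
  simp only [GpdAction.comap_act]
  rw [ac.act_of_mem_ker (hS.conj_mem hnS h) (by rw [Tb.p_inv, a.2, G.src_mul _ _ han, G.src_inv]),
    Tb.mul_mul_inv_cancel (by rw [a.2, ac.p_act _ _ (by rw [n.2, hπ.src_apply, h]), hπ.rng_apply]),
    G.inv_conj h hiso, hn1, hφ.map_conj _ _ (hS.inv_mem hnS) (by rw [G.rng_inv, hiso, h])]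

theorem isNormal_invGraph (hφ : IsEquivariantOnKer G ac π φ) (hπ : G.IsHom H π) :
    (ac.comap hπ).semidirect.IsNormal (invGraph Tb G (G.ker H π) φ) where
  src_eq_rng _ hn := hπ.src_eq_rng_of_mem_ker hn.1
  unit_mem x := ⟨hπ.isNormal_ker.unit_mem x, by
    show Tb.one x = φ (G.inv (G.unit x))
    rw [G.inv_unit, hφ.map_unit]⟩
  mul_mem hm hn h := hφ.mul_mem_invGraph hπ hm hn h
  inv_mem hn := hφ.inv_mem_invGraph hπ hn
  conj_mem hn h := hφ.conj_mem_invGraph hπ hn h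

theorem semidirect_mul_val_of_mem_invGraph (hφ : IsEquivariantOnKer G ac π φ)
    (hπ : G.IsHom H π) {n q : Tb.FibProd G} (hn : n ∈ invGraph Tb G (G.ker H π) φ)
    (h : G.src n.1.2 = G.rng q.1.2) :
    ((ac.comap hπ).semidirect.mul n q).1 = (Tb.mul q.1.1 (φ (G.inv n.1.2)), G.mul n.1.2 q.1.2) := by
  obtain ⟨hnS, hn1⟩ := hn
  have hp : Tb.p (φ (G.inv n.1.2)) = Tb.p q.1.1 := by
    rw [hφ.p_apply _ (hπ.isNormal_ker.inv_mem hnS), G.src_inv, ← hπ.src_eq_rng_of_mem_ker hnS,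
      h, q.2]
  rw [(ac.comap hπ).semidirect_mul_val h, GpdAction.comap_act, hn1,
    ac.act_of_mem_ker hnS (q.2.trans h.symm), Tb.mul_comm _ _ hp]

theorem orbitRel_invGraph_eq (hφ : IsEquivariantOnKer G ac π φ) (hπ : G.IsHom H π) :
    (ac.comap hπ).semidirect.orbitRel (invGraph Tb G (G.ker H π) φ) = fun q q' =>
      ∃ s ∈ G.ker H π, G.src s = G.rng q.1.2 ∧
        q'.1 = (Tb.mul q.1.1 (φ (G.inv s)), G.mul s q.1.2) := by
  ext q q'
  constructor
  · rintro ⟨n, hn, h, rfl⟩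
    exact ⟨n.1.2, hn.1, h, hφ.semidirect_mul_val_of_mem_invGraph hπ hn h⟩
  · rintro ⟨s, hs, h, hq'⟩
    have hp : Tb.p (φ (G.inv s)) = G.rng s := by
      rw [hφ.p_apply _ (hπ.isNormal_ker.inv_mem hs), G.src_inv]
    have hn : ⟨(φ (G.inv s), s), hp⟩ ∈ invGraph Tb G (G.ker H π) φ := ⟨hs, rfl⟩
    exact ⟨_, hn, h,
      Subtype.ext (hq'.trans (hφ.semidirect_mul_val_of_mem_invGraph hπ hn h).symm)⟩

theorem injective_mk_toFibProd (hφ : IsEquivariantOnKer G ac π φ) (hπ : G.IsHom H π) :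
    Function.Injective fun t =>
      Quot.mk ((ac.comap hπ).semidirect.orbitRel (invGraph Tb G (G.ker H π) φ))
        (Tb.toFibProd G t) := by
  intro t t' h
  rw [(hφ.isNormal_invGraph hπ).mk_eq_mk_iff, hφ.orbitRel_invGraph_eq hπ] at h
  obtain ⟨s, -, hs : G.src s = G.rng (G.unit (Tb.p t)), hval⟩ := h
  rw [G.rng_unit] at hs
  obtain ⟨ht', hunit⟩ := Prod.ext_iff.mp hval
  dsimp only [GrpBundle.toFibProd] at ht' hunit
  rw [← hs, G.mul_unit] at hunit
  have hp : Tb.p t = Tb.p t' := by rw [← hs, ← hunit, G.src_unit]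
  rw [ht', ← hunit, G.inv_unit, hφ.map_unit, ← hp, Tb.mul_one]

theorem quotientLift_eq_unit_iff (hφ : IsEquivariantOnKer G ac π φ) (hπ : G.IsHom H π)
    (z : Quot ((ac.comap hπ).semidirect.orbitRel (invGraph Tb G (G.ker H π) φ))) :
    ((ac.comap hπ).isHom_semidirect_snd.comp hπ).quotientLift (fun _ hn => hn.1) z =
        H.unit ((hφ.isNormal_invGraph hπ).quotient.src z) ↔
      ∃ t, z = Quot.mk _ (Tb.toFibProd G t) := by
  constructor
  · rcases z with ⟨q⟩
    intro (hq : q.1.2 ∈ G.ker H π)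
    have hiso := hπ.src_eq_rng_of_mem_ker hq
    have hp : Tb.p q.1.1 = Tb.p (φ q.1.2) := by rw [q.2, hφ.p_apply _ hq, hiso]
    refine ⟨Tb.mul q.1.1 (φ q.1.2), ?_⟩
    rw [(hφ.isNormal_invGraph hπ).mk_eq_mk_iff, hφ.orbitRel_invGraph_eq hπ]
    refine ⟨G.inv q.1.2, hπ.isNormal_ker.inv_mem hq, G.src_inv _, ?_⟩
    simp only [GrpBundle.toFibProd]
    rw [G.inv_inv, G.inv_mul, Tb.p_mul _ _ hp, q.2, hiso]
  · rintro ⟨t, rfl⟩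
    exact (hπ.isNormal_ker.unit_mem _ : G.unit (Tb.p t) ∈ G.ker H π)

end IsEquivariantOnKer

end Pushout

theorem stmt3_general {X A B T : Type*} (G : Gpd X A) (H : Gpd X B)
    (Tb : GrpBundle X T) (ac : GpdAction H Tb)
    (π : A → B)
    (hsrc : ∀ a, H.src (π a) = G.src a)
    (hrng : ∀ a, H.rng (π a) = G.rng a)
    (hmulπ : ∀ a b, G.src a = G.rng b → π (G.mul a b) = H.mul (π a) (π b))
    (hunitπ : ∀ x, π (G.unit x) = H.unit x)
    (hsurj : Function.Surjective π)
    (S : Set A) (hker : S = {a | π a = H.unit (G.src a)})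
    (φ : A → T)
    (hφp : ∀ a ∈ S, Tb.p (φ a) = G.src a)
    (hφmul : ∀ a b, a ∈ S → b ∈ S → G.src a = G.src b →
      φ (G.mul a b) = Tb.mul (φ a) (φ b))
    (hφunit : ∀ x, φ (G.unit x) = Tb.one x)
    (hφequiv : ∀ γ s, s ∈ S → G.rng s = G.src γ →
      φ (G.mul (G.mul γ s) (G.inv γ)) = ac.act (π γ) (φ s))
    (rrel : {q : T × A // Tb.p q.1 = G.rng q.2} →
      {q : T × A // Tb.p q.1 = G.rng q.2} → Prop)
    (hrrel : rrel = fun q q' => ∃ s ∈ S, G.src s = G.rng q.val.2 ∧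
      q'.val = (Tb.mul q.val.1 (φ (G.inv s)), G.mul s q.val.2)) :
    ∃ (Q : Gpd X (Quot rrel)),
      (∀ q, Q.src (Quot.mk rrel q) = G.src q.val.2) ∧
      (∀ q, Q.rng (Quot.mk rrel q) = G.rng q.val.2) ∧
      (∀ x, ∃ u, u.val = (Tb.one x, G.unit x) ∧ Q.unit x = Quot.mk rrel u) ∧
      (∀ q q', G.src q.val.2 = G.rng q'.val.2 →
        ∃ m, m.val = (Tb.mul q.val.1 (ac.act (π q.val.2) q'.val.1),
            G.mul q.val.2 q'.val.2) ∧
          Q.mul (Quot.mk rrel q) (Quot.mk rrel q') = Quot.mk rrel m) ∧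
      ∃ pbar : Quot rrel → B,
        (∀ q, pbar (Quot.mk rrel q) = π q.val.2) ∧
        Function.Surjective pbar ∧
        (∀ z, H.src (pbar z) = Q.src z ∧ H.rng (pbar z) = Q.rng z) ∧
        (∀ z w, Q.src z = Q.rng w → pbar (Q.mul z w) = H.mul (pbar z) (pbar w)) ∧
        (∀ x, pbar (Q.unit x) = H.unit x) ∧
        ∃ j : T → Quot rrel,
          (∀ t, ∃ u, u.val = (t, G.unit (Tb.p t)) ∧ j t = Quot.mk rrel u) ∧
          Function.Injective j ∧
          (∀ z, pbar z = H.unit (Q.src z) ↔ ∃ t, z = j t) ∧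
          (∀ t t', Tb.p t = Tb.p t' →
            j (Tb.mul t t') = Q.mul (j t) (j t')) := by
  subst hker
  have hπ : G.IsHom H π := ⟨hsrc, hrng, hmulπ, hunitπ⟩
  have hφ : IsEquivariantOnKer G ac π φ := ⟨hφp, hφmul, hφunit, hφequiv⟩
  obtain rfl := hrrel.trans (hφ.orbitRel_invGraph_eq hπ).symm
  have hN := hφ.isNormal_invGraph hπ
  have hproj := ((ac.comap hπ).isHom_semidirect_snd.comp hπ).isHom_quotientLift
    (fun _ hn => hn.1) hN
  refine ⟨hN.quotient, fun _ => rfl, fun _ => rfl, fun _ => ⟨_, rfl, rfl⟩,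
    fun _ _ h => ⟨_, (ac.comap hπ).semidirect_mul_val h, hN.quotient_mul_mk h⟩,
    _, fun _ => rfl, ?_, fun z => ⟨hproj.src_apply z, hproj.rng_apply z⟩, hproj.map_mul,
    hproj.map_unit, _, fun _ => ⟨_, rfl, rfl⟩, hφ.injective_mk_toFibProd hπ,
    hφ.quotientLift_eq_unit_iff hπ, fun t t' h => ?_⟩
  · exact Function.Surjective.of_comp (g := Quot.mk _)
      (hsurj.comp (GrpBundle.FibProd.snd_surjective Tb G))
  · rw [hN.quotient_mul_mk (by exact (G.src_unit _).trans (h.trans (G.rng_unit _).symm)),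
      (ac.comap hπ).semidirect_mul_toFibProd h]

/-- the quotient `G̲` of `T * G` by the left `S`-action
`s·(t,γ) = (t·φ(s⁻¹), sγ)` is a groupoid with multiplication
`[t,γ][t',γ'] = [t·(π(γ)·t'), γγ']`; the map `π̲ : G̲ → H`, `[t,γ] ↦ π γ`,
is a surjective groupoid homomorphism which is the identity on units, and its
kernel is isomorphic to `T` via `t ↦ [t, p_T t]`. -/
theorem stmt3 {X A B T : Type*} (G : Gpd X A) (H : Gpd X B)
    (Tb : GrpBundle X T) (ac : GpdAction H Tb)
    (π : A → B)
    (hsrc : ∀ a, H.src (π a) = G.src a)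
    (hrng : ∀ a, H.rng (π a) = G.rng a)
    (hmulπ : ∀ a b, G.src a = G.rng b → π (G.mul a b) = H.mul (π a) (π b))
    (hunitπ : ∀ x, π (G.unit x) = H.unit x)
    (hsurj : Function.Surjective π)
    (S : Set A) (hker : S = {a | π a = H.unit (G.src a)})
    (hiso : ∀ a ∈ S, G.src a = G.rng a)
    (φ : A → T)
    (hφp : ∀ a ∈ S, Tb.p (φ a) = G.src a)
    (hφmul : ∀ a b, a ∈ S → b ∈ S → G.src a = G.src b →
      φ (G.mul a b) = Tb.mul (φ a) (φ b))
    (hφunit : ∀ x, φ (G.unit x) = Tb.one x)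
    (hφequiv : ∀ γ s, s ∈ S → G.rng s = G.src γ →
      φ (G.mul (G.mul γ s) (G.inv γ)) = ac.act (π γ) (φ s))
    (rrel : {q : T × A // Tb.p q.1 = G.rng q.2} →
      {q : T × A // Tb.p q.1 = G.rng q.2} → Prop)
    (hrrel : rrel = fun q q' => ∃ s ∈ S, G.src s = G.rng q.val.2 ∧
      q'.val = (Tb.mul q.val.1 (φ (G.inv s)), G.mul s q.val.2)) :
    ∃ (Q : Gpd X (Quot rrel)),
      (∀ q, Q.src (Quot.mk rrel q) = G.src q.val.2) ∧
      (∀ q, Q.rng (Quot.mk rrel q) = G.rng q.val.2) ∧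
      (∀ x, ∃ u, u.val = (Tb.one x, G.unit x) ∧ Q.unit x = Quot.mk rrel u) ∧
      (∀ q q', G.src q.val.2 = G.rng q'.val.2 →
        ∃ m, m.val = (Tb.mul q.val.1 (ac.act (π q.val.2) q'.val.1),
            G.mul q.val.2 q'.val.2) ∧
          Q.mul (Quot.mk rrel q) (Quot.mk rrel q') = Quot.mk rrel m) ∧
      ∃ pbar : Quot rrel → B,
        (∀ q, pbar (Quot.mk rrel q) = π q.val.2) ∧
        Function.Surjective pbar ∧
        (∀ z, H.src (pbar z) = Q.src z ∧ H.rng (pbar z) = Q.rng z) ∧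
        (∀ z w, Q.src z = Q.rng w → pbar (Q.mul z w) = H.mul (pbar z) (pbar w)) ∧
        (∀ x, pbar (Q.unit x) = H.unit x) ∧
        ∃ j : T → Quot rrel,
          (∀ t, ∃ u, u.val = (t, G.unit (Tb.p t)) ∧ j t = Quot.mk rrel u) ∧
          Function.Injective j ∧
          (∀ z, pbar z = H.unit (Q.src z) ↔ ∃ t, z = j t) ∧
          (∀ t t', Tb.p t = Tb.p t' →
            j (Tb.mul t t') = Q.mul (j t) (j t')) :=
  stmt3_general G H Tb ac π hsrc hrng hmulπ hunitπ hsurj S hker φ hφp hφmul hφunit hφequiv rrel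
    hrrel
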